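/- (Convergence of normalized imaginary-time evolution to the ground-subspace projection.) Fix d ≥ 1, E : Fin d → ℝ with E₀ := min_k E_k, and c : Fin d → ℂ with Σ_k |c_k|² = 1; assume γ₀ := Σ_{k : E_k = E₀} |c_k|² > 0. For β ∈ ℝ define v(β) ∈ ℂ^d by v(β)_k = c_k·e^{−β·E_k}. Then v(β) ≠ 0 for all β, and as β → ∞ the normalized vector v(β)/‖v(β)‖ converges (in the Euclidean norm on ℂ^d) to the vector u with u_k = c_k/√γ₀ when E_k = E₀ and u_k = 0 otherwise. -/

import Mathlib

/-- The unnormalized imaginary-time coordinate vector `v(β) ∈ ℂ^d`,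
`v(β)_k = c_k·e^{−β·E_k}`, as an element of Euclidean space. -/
noncomputable def iteVec {d : ℕ} (E : Fin d → ℝ) (c : Fin d → ℂ) (β : ℝ) :
    EuclideanSpace ℂ (Fin d) :=
  (WithLp.equiv 2 (Fin d → ℂ)).symm fun k => c k * Real.exp (-(β * E k))

/-!
Factoring out `e^{−βE₀}`, which normalization does not see, leaves the vector with coordinates
`c_k e^{−β(E_k − E₀)}`. These tend to `c_k` on the ground levels and to `0` elsewhere, so the
shifted vector converges to the ground projection `Π_G ψ₀`, whose norm is `√γ₀ > 0`; and
`x ↦ x / ‖x‖` is continuous away from `0`.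
-/

open Filter Topology

section Normalization

variable {V : Type*} [NormedAddCommGroup V] [NormedSpace ℝ V]

theorem inv_norm_smul_smul_of_pos {r : ℝ} (hr : 0 < r) (x : V) :
    ‖r • x‖⁻¹ • (r • x) = ‖x‖⁻¹ • x := by
  rw [norm_smul, Real.norm_of_nonneg hr.le, mul_inv, smul_smul, mul_right_comm,
    inv_mul_cancel₀ hr.ne', one_mul]

theorem Filter.Tendsto.inv_norm_smul {α : Type*} {l : Filter α} {f : α → V} {x : V}
    (hf : Tendsto f l (𝓝 x)) (hx : x ≠ 0) :
    Tendsto (fun a => ‖f a‖⁻¹ • f a) l (𝓝 (‖x‖⁻¹ • x)) :=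
  (hf.norm.inv₀ (norm_ne_zero_iff.mpr hx)).smul hf

end Normalization

theorem tendsto_exp_neg_mul_atTop_nhds_zero {a : ℝ} (ha : 0 < a) :
    Tendsto (fun β : ℝ => Real.exp (-(β * a))) atTop (𝓝 0) :=
  Real.tendsto_exp_comp_nhds_zero.2 (tendsto_neg_atBot_iff.2 (tendsto_id.atTop_mul_const ha))

namespace EuclideanSpace

variable {ι 𝕜 : Type*} [Fintype ι] [RCLike 𝕜] (p : ι → Prop) [DecidablePred p] (x : ι → 𝕜)

theorem norm_toLp_ite :
    ‖WithLp.toLp 2 (fun i => if p i then x i else 0)‖ =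
      √(∑ i ∈ Finset.univ.filter p, ‖x i‖ ^ 2) := by
  rw [EuclideanSpace.norm_eq, Finset.sum_filter]
  congr 1
  refine Finset.sum_congr rfl fun i _ => ?_
  split_ifs with hi <;> simp [hi]

theorem inv_norm_smul_toLp_ite :
    ‖WithLp.toLp 2 (fun i => if p i then x i else 0)‖⁻¹ •
        WithLp.toLp 2 (fun i => if p i then x i else 0) =
      WithLp.toLp 2 fun i =>
        if p i then x i / ((√(∑ j ∈ Finset.univ.filter p, ‖x j‖ ^ 2) : ℝ) : 𝕜) else 0 := by
  ext i
  rw [norm_toLp_ite, PiLp.smul_apply]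
  by_cases hi : p i <;> simp [hi, RCLike.real_smul_eq_coe_mul, div_eq_inv_mul]

end EuclideanSpace

section iteVec

variable {d : ℕ} (E : Fin d → ℝ) (c : Fin d → ℂ)

theorem iteVec_apply (β : ℝ) (k : Fin d) : iteVec E c β k = c k * Real.exp (-(β * E k)) := rfl

theorem iteVec_eq_zero_iff (β : ℝ) : iteVec E c β = 0 ↔ c = 0 := by
  rw [← WithLp.toLp_zero, iteVec, WithLp.equiv_symm_apply, (WithLp.toLp_injective 2).eq_iff,
    funext_iff, funext_iff]
  simp

theorem iteVec_eq_exp_smul_iteVec_sub (E₀ β : ℝ) :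
    iteVec E c β = Real.exp (-(β * E₀)) • iteVec (fun k => E k - E₀) c β := by
  ext k
  rw [PiLp.smul_apply, iteVec_apply, iteVec_apply, Complex.real_smul, mul_left_comm,
    ← Complex.ofReal_mul, ← Real.exp_add]
  ring_nf

theorem tendsto_iteVec_sub_atTop {E₀ : ℝ} (hE₀ : ∀ k, E₀ ≤ E k) :
    Tendsto (iteVec (fun k => E k - E₀) c) atTop
      (𝓝 (WithLp.toLp 2 fun k => if E k = E₀ then c k else 0)) := by
  refine ((PiLp.continuous_toLp 2 _).tendsto _).comp (tendsto_pi_nhds.2 fun k => ?_)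
  by_cases hk : E k = E₀
  · simp [hk]
  · have hdecay := tendsto_exp_neg_mul_atTop_nhds_zero (sub_pos.2 ((hE₀ k).lt_of_ne' hk))
    simpa [hk] using ((Complex.continuous_ofReal.tendsto 0).comp hdecay).const_mul (c k)

end iteVec

open Classical in
theorem normalized_ite_tendsto_ground_projection_general {d : ℕ}
    (E : Fin d → ℝ) (c : Fin d → ℂ)
    (E₀ : ℝ) (hE₀le : ∀ k, E₀ ≤ E k)
    (hγ : 0 < ∑ k ∈ Finset.univ.filter fun k => E k = E₀, ‖c k‖ ^ 2) :
    (∀ β : ℝ, iteVec E c β ≠ 0) ∧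
    Filter.Tendsto (fun β : ℝ => ‖iteVec E c β‖⁻¹ • iteVec E c β) Filter.atTop
      (nhds ((WithLp.equiv 2 (Fin d → ℂ)).symm fun k =>
        if E k = E₀ then
          c k / ((Real.sqrt (∑ j ∈ Finset.univ.filter fun j => E j = E₀, ‖c j‖ ^ 2) : ℝ) : ℂ)
        else 0)) := by
  have hc : c ≠ 0 := by
    rintro rfl
    simp at hγ
  have hground : (WithLp.toLp 2 fun k => if E k = E₀ then c k else 0) ≠ 0 := by
    rw [← norm_ne_zero_iff, EuclideanSpace.norm_toLp_ite]
    exact (Real.sqrt_pos.2 hγ).ne'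
  refine ⟨fun β => (iteVec_eq_zero_iff E c β).not.2 hc, ?_⟩
  rw [WithLp.equiv_symm_apply, ← RCLike.ofReal_eq_complex_ofReal,
    ← EuclideanSpace.inv_norm_smul_toLp_ite]
  simp_rw [iteVec_eq_exp_smul_iteVec_sub E c E₀, inv_norm_smul_smul_of_pos (Real.exp_pos _)]
  exact (tendsto_iteVec_sub_atTop E c hE₀le).inv_norm_smul hground

open Classical in
/-- Convergence of normalized imaginary-time evolution to the ground-subspace
projection: for `d ≥ 1`, energies `E` with minimum `E₀`, amplitudes `c` with
`∑_k|c_k|² = 1` and ground overlap `γ₀ = ∑_{k : E_k = E₀}|c_k|² > 0`, the vector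
`v(β)` with `v(β)_k = c_k·e^{−βE_k}` is nonzero for all `β`, and as `β → ∞` the normalized
vector `v(β)/‖v(β)‖` converges in the Euclidean norm to the vector `u` with
`u_k = c_k/√γ₀` when `E_k = E₀` and `u_k = 0` otherwise. -/
theorem normalized_ite_tendsto_ground_projection {d : ℕ} (hd : 1 ≤ d)
    (E : Fin d → ℝ) (c : Fin d → ℂ) (hnorm : ∑ k, ‖c k‖ ^ 2 = 1)
    (E₀ : ℝ) (hE₀le : ∀ k, E₀ ≤ E k) (hE₀mem : ∃ k, E k = E₀)
    (hγ : 0 < ∑ k ∈ Finset.univ.filter fun k => E k = E₀, ‖c k‖ ^ 2) :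
    (∀ β : ℝ, iteVec E c β ≠ 0) ∧
    Filter.Tendsto (fun β : ℝ => ‖iteVec E c β‖⁻¹ • iteVec E c β) Filter.atTop
      (nhds ((WithLp.equiv 2 (Fin d → ℂ)).symm fun k =>
        if E k = E₀ then
          c k / ((Real.sqrt (∑ j ∈ Finset.univ.filter fun j => E j = E₀, ‖c j‖ ^ 2) : ℝ) : ℂ)
        else 0)) :=
  normalized_ite_tendsto_ground_projection_general E c E₀ hE₀le hγ
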